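/- Measuring implies the negation of Weak Club Guessing: if for every club-sequence ⟨C_δ : δ ∈ Lim(ω1)⟩ there is a club of ω1 measuring it, then there is no ladder system ⟨L_δ : δ ∈ Lim(ω1)⟩ such that every club of ω1 has infinite intersection with some L_δ. -/

import Mathlib

/-- `ω₁` as an ordinal. -/
noncomputable def omega1 : Ordinal := (Cardinal.aleph 1).ord

/-- `C` is a club of the ordinal `δ`: a subset of `δ` that is cofinal in `δ` and
closed (every nonzero `β < δ` which is a limit of elements of `C` belongs to `C`). -/
def IsClubIn (δ : Ordinal) (C : Set Ordinal) : Prop :=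
  C ⊆ Set.Iio δ ∧
  (∀ β < δ, ∃ γ ∈ C, β ≤ γ) ∧
  (∀ β < δ, 0 < β → (∀ γ < β, ∃ c ∈ C, γ < c ∧ c < β) → β ∈ C)

/-- `L` is a ladder on the limit ordinal `δ`: a cofinal subset of `δ` of
order type `ω`. -/
def IsLadderOn (δ : Ordinal) (L : Set Ordinal) : Prop :=
  ∃ f : ℕ → Ordinal, StrictMono f ∧ Set.range f = L ∧
    (∀ n, f n < δ) ∧ (∀ β < δ, ∃ n, β ≤ f n)

/-!
Measure the ladder system itself: a ladder on `δ` has no limit points below `δ`, so it is a club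
of `δ`, and Measuring yields a club `D` measuring it. The limit points of `D` form a club `D'`,
and if `D'` meets some ladder `L_δ` in an infinite set, these points are cofinal in `δ`, so `δ`
is a limit point of `D` and `D` must measure `L_δ` at `δ`. It cannot: cofinally many points of
`D` lie on `L_δ`, and just below each such point, which is a limit of `D` but not of `L_δ`,
there are points of `D` strictly between two consecutive rungs.

The hypothesis and the conclusion quantify over ordinals of independent universes, so both are
first moved to a common universe along `Ordinal.lift`.
-/

universe u v

open scoped Cardinal

open Ordinal Order Set Function

def accPts (δ : Ordinal) (C : Set Ordinal) : Set Ordinal :=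
  {β | β < δ ∧ 0 < β ∧ ∀ γ < β, ∃ c ∈ C, γ < c ∧ c < β}

def MeasuresAt (D C : Set Ordinal) (δ : Ordinal) : Prop :=
  ∃ α < δ, (∀ x ∈ D, x < δ → α ≤ x → x ∈ C) ∨ (∀ x ∈ D, α ≤ x → x ∉ C)

def Measuring : Prop :=
  ∀ Cseq : Ordinal.{u} → Set Ordinal.{u},
    (∀ δ, δ < omega1 → IsSuccLimit δ → IsClubIn δ (Cseq δ)) →
    ∃ D : Set Ordinal, IsClubIn omega1 D ∧ ∀ δ ∈ D, IsSuccLimit δ → MeasuresAt D (Cseq δ) δ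

def WeakClubGuessing : Prop :=
  ∃ L : Ordinal.{u} → Set Ordinal.{u},
    (∀ δ, δ < omega1 → IsSuccLimit δ → IsLadderOn δ (L δ)) ∧
    ∀ D : Set Ordinal, IsClubIn omega1 D → ∃ δ, δ < omega1 ∧ IsSuccLimit δ ∧ (D ∩ L δ).Infinite

theorem omega1_eq_omega_one : omega1.{u} = ω₁ := Cardinal.ord_aleph 1

theorem aleph0_lt_cof_omega1 : ℵ₀ < omega1.{u}.cof := by
  rw [omega1_eq_omega_one, Cardinal.cof_omega_one]
  exact Cardinal.aleph0_lt_aleph_one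

theorem lift_omega1 : Ordinal.lift.{v} omega1.{u} = omega1.{max u v} := by
  rw [omega1_eq_omega_one, omega1_eq_omega_one, lift_omega, Ordinal.lift_one]

section Clubs

variable {κ δ : Ordinal} {C D L S : Set Ordinal}

theorem IsClubIn.accPts_subset (hC : IsClubIn δ C) : accPts δ C ⊆ C :=
  fun β ⟨hβ, hβ0, hacc⟩ => hC.2.2 β hβ hβ0 hacc

theorem IsClubIn.isClubIn_accPts (hC : IsClubIn δ C) (hδ : ℵ₀ < δ.cof) :
    IsClubIn δ (accPts δ C) := by
  refine ⟨fun β hβ => hβ.1, fun β hβ => ?_, fun β hβ hβ0 hacc => ⟨hβ, hβ0, fun γ hγ => ?_⟩⟩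
  · have hnext : ∀ x < δ, ∃ y ∈ C, x < y := fun x hx =>
      let ⟨y, hy, hxy⟩ := hC.2.1 _ ((one_lt_cof_iff.1 (Cardinal.one_lt_aleph0.trans hδ)).succ_lt hx)
      ⟨y, hy, (lt_succ x).trans_le hxy⟩
    choose! next hnextC hnext using hnext
    set d : ℕ → Ordinal := fun n => next^[n] β
    have hd_succ (n : ℕ) : d (n + 1) = next (d n) := iterate_succ_apply' next n β
    have hd_lt (n : ℕ) : d n < δ := by
      induction n with
      | zero => exact hβ
      | succ n ih => exact hd_succ n ▸ hC.1 (hnextC _ ih)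
    have hd_strict (n : ℕ) : d n < d (n + 1) := hd_succ n ▸ hnext _ (hd_lt n)
    have hd_lt_sup (n : ℕ) : d n < ⨆ m, d m := (hd_strict n).trans_le (Ordinal.le_iSup d _)
    refine ⟨⨆ n, d n, ⟨?_, zero_le.trans_lt (hd_lt_sup 0), fun η hη => ?_⟩,
      Ordinal.le_iSup d 0⟩
    · exact lift_iSup_lt_of_lt_cof (by simpa using hδ) hd_lt
    · obtain ⟨n, hn⟩ := Ordinal.lt_iSup_iff.1 hη
      exact ⟨d (n + 1), hd_succ n ▸ hnextC _ (hd_lt n), hn.trans (hd_strict n), hd_lt_sup _⟩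
  · obtain ⟨c, hc, hγc, hcβ⟩ := hacc γ hγ
    exact ⟨c, hC.accPts_subset hc, hγc, hcβ⟩

theorem IsLadderOn.accPts_eq_empty (hL : IsLadderOn δ L) : accPts δ L = ∅ := by
  classical
  obtain ⟨f, hf, rfl, -, hcof⟩ := hL
  refine eq_empty_of_forall_notMem fun β ⟨hβ, hβ0, hacc⟩ => ?_
  have hex : ∃ n, β ≤ f n := hcof β hβ
  -- below the first rung above `β` there is a gap `(γ, β)` free of rungs
  obtain ⟨γ, hγβ, hgap⟩ : ∃ γ < β, ∀ m, γ < f m → β ≤ f m := by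
    have hβle := Nat.find_spec hex
    cases hn : Nat.find hex with
    | zero =>
      rw [hn] at hβle
      exact ⟨0, hβ0, fun m _ => hβle.trans (hf.monotone (Nat.zero_le m))⟩
    | succ j =>
      rw [hn] at hβle
      refine ⟨f j, not_le.1 (Nat.find_min hex (hn ▸ j.lt_succ_self)), fun m hm => ?_⟩
      exact hβle.trans (hf.monotone (hf.lt_iff_lt.1 hm))
  obtain ⟨_, ⟨m, rfl⟩, hγm, hmβ⟩ := hacc γ hγβ
  exact (hgap m hγm).not_gt hmβ

theorem IsLadderOn.subset_Iio (hL : IsLadderOn δ L) : L ⊆ Iio δ := by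
  obtain ⟨f, -, rfl, hlt, -⟩ := hL
  exact range_subset_iff.2 hlt

theorem IsLadderOn.isClubIn (hL : IsLadderOn δ L) : IsClubIn δ L := by
  refine ⟨hL.subset_Iio, fun β hβ => ?_, fun β hβ hβ0 hacc => ?_⟩
  · obtain ⟨f, -, rfl, -, hcof⟩ := hL
    obtain ⟨n, hn⟩ := hcof β hβ
    exact ⟨f n, mem_range_self n, hn⟩
  · exact absurd (hL.accPts_eq_empty ▸ ⟨hβ, hβ0, hacc⟩ : β ∈ (∅ : Set Ordinal)) (notMem_empty β)

theorem IsLadderOn.exists_lt_of_infinite (hL : IsLadderOn δ L) (hS : S ⊆ L) (hinf : S.Infinite)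
    {β : Ordinal} (hβ : β < δ) : ∃ x ∈ S, β < x := by
  obtain ⟨f, hf, rfl, -, hcof⟩ := hL
  obtain ⟨n, hn⟩ := hcof β hβ
  obtain ⟨m, hm, hnm⟩ := (hinf.preimage hS).exists_gt n
  exact ⟨f m, hm, hn.trans_lt (hf hnm)⟩

theorem IsClubIn.mem_of_infinite_inter_ladder (hC : IsClubIn κ C) (hδ : δ < κ)
    (hL : IsLadderOn δ L) (hinf : (C ∩ L).Infinite) : δ ∈ C := by
  obtain ⟨x, -, hx⟩ := hinf.nonempty
  refine hC.accPts_subset ⟨hδ, zero_le.trans_lt (hL.subset_Iio hx), fun γ hγ => ?_⟩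
  obtain ⟨y, ⟨hyC, hyL⟩, hγy⟩ := hL.exists_lt_of_infinite inter_subset_right hinf hγ
  exact ⟨y, hyC, hγy, hL.subset_Iio hyL⟩

theorem not_measuresAt_of_infinite_inter_accPts (hD : IsClubIn κ D) (hL : IsLadderOn δ L)
    (hinf : (accPts κ D ∩ L).Infinite) : ¬ MeasuresAt D L δ := by
  rintro ⟨α, hα, hin | hout⟩ <;>
    obtain ⟨x, ⟨hxD, hxL⟩, hαx⟩ := hL.exists_lt_of_infinite inter_subset_right hinf hα
  · have hxδ : x < δ := hL.subset_Iio hxL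
    have hx : x ∉ accPts δ L := hL.accPts_eq_empty ▸ notMem_empty x
    simp only [accPts, mem_ofPred_eq, not_and, not_forall, not_exists] at hx
    obtain ⟨γ, hγx, hgap⟩ := hx hxδ hxD.2.1
    obtain ⟨d, hdD, hd, hdx⟩ := hxD.2.2 (max α γ) (max_lt hαx hγx)
    have hdL : d ∈ L := hin d hdD (hdx.trans hxδ) ((le_max_left α γ).trans hd.le)
    exact hgap d hdL ((le_max_right α γ).trans_lt hd) hdx
  · exact hout x (hD.accPts_subset hxD) hαx.le hxL

end Clubs

theorem not_weakClubGuessing_of_measuring (h : Measuring.{u}) : ¬ WeakClubGuessing.{u} := by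
  rintro ⟨L, hL, hguess⟩
  obtain ⟨D, hD, hmeas⟩ := h L fun δ hδ hlim => (hL δ hδ hlim).isClubIn
  have hD' := hD.isClubIn_accPts aleph0_lt_cof_omega1
  obtain ⟨δ, hδ, hlim, hinf⟩ := hguess _ hD'
  have hδD : δ ∈ D := hD.accPts_subset (hD'.mem_of_infinite_inter_ladder hδ (hL δ hδ hlim) hinf)
  exact not_measuresAt_of_infinite_inter_accPts hD (hL δ hδ hlim) hinf (hmeas δ hδD hlim)

section Lift

variable {δ : Ordinal.{u}}

theorem lift_pos_iff : 0 < Ordinal.lift.{v} δ ↔ 0 < δ := by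
  simpa only [Ordinal.lift_zero] using lift_lt.{v} (a := 0) (b := δ)

theorem IsClubIn.lift {C : Set Ordinal.{u}} (hC : IsClubIn δ C) :
    IsClubIn (Ordinal.lift.{v} δ) (Ordinal.lift.{v} '' C) := by
  obtain ⟨hsub, hcof, hclosed⟩ := hC
  refine ⟨?_, fun β' hβ' => ?_, fun β' hβ' hβ0 hacc => ?_⟩
  · rintro _ ⟨c, hc, rfl⟩
    exact lift_lt.2 (hsub hc)
  · obtain ⟨β, hβ, rfl⟩ := Ordinal.lt_lift_iff.1 hβ'
    obtain ⟨γ, hγ, hβγ⟩ := hcof β hβ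
    exact ⟨_, mem_image_of_mem _ hγ, lift_le.2 hβγ⟩
  · obtain ⟨β, hβ, rfl⟩ := Ordinal.lt_lift_iff.1 hβ'
    refine mem_image_of_mem _ (hclosed β hβ (lift_pos_iff.1 hβ0) fun γ hγ => ?_)
    obtain ⟨_, ⟨c, hc, rfl⟩, hγc, hcβ⟩ := hacc _ (lift_lt.2 hγ)
    exact ⟨c, hc, lift_lt.1 hγc, lift_lt.1 hcβ⟩

theorem IsClubIn.preimage_lift {C : Set Ordinal.{max u v}}
    (hC : IsClubIn (Ordinal.lift.{v} δ) C) : IsClubIn δ (Ordinal.lift.{v} ⁻¹' C) := by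
  obtain ⟨hsub, hcof, hclosed⟩ := hC
  refine ⟨fun c hc => lift_lt.1 (hsub hc), fun β hβ => ?_, fun β hβ hβ0 hacc => ?_⟩
  · obtain ⟨γ, hγ, hβγ⟩ := hcof _ (lift_lt.2 hβ)
    obtain ⟨γ, -, rfl⟩ := Ordinal.lt_lift_iff.1 (hsub hγ)
    exact ⟨γ, hγ, lift_le.1 hβγ⟩
  · refine hclosed _ (lift_lt.2 hβ) (lift_pos_iff.2 hβ0) fun γ' hγ' => ?_
    obtain ⟨γ, hγβ, rfl⟩ := Ordinal.lt_lift_iff.1 hγ'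
    obtain ⟨c, hc, hγc, hcβ⟩ := hacc γ hγβ
    exact ⟨_, hc, lift_lt.2 hγc, lift_lt.2 hcβ⟩

theorem IsLadderOn.lift {L : Set Ordinal.{u}} (hL : IsLadderOn δ L) :
    IsLadderOn (Ordinal.lift.{v} δ) (Ordinal.lift.{v} '' L) := by
  obtain ⟨f, hf, rfl, hlt, hcof⟩ := hL
  refine ⟨Ordinal.lift.{v} ∘ f, fun m n hmn => lift_lt.2 (hf hmn), range_comp _ _,
    fun n => lift_lt.2 (hlt n), fun β' hβ' => ?_⟩
  obtain ⟨β, hβ, rfl⟩ := Ordinal.lt_lift_iff.1 hβ'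
  obtain ⟨n, hn⟩ := hcof β hβ
  exact ⟨n, lift_le.2 hn⟩

theorem MeasuresAt.lift {D : Set Ordinal.{u}} {C : Set Ordinal.{max u v}}
    (h : MeasuresAt D (Ordinal.lift.{v} ⁻¹' C) δ) :
    MeasuresAt (Ordinal.lift.{v} '' D) C (Ordinal.lift.{v} δ) := by
  obtain ⟨α, hα, hin | hout⟩ := h
  · refine ⟨_, lift_lt.2 hα, Or.inl ?_⟩
    rintro _ ⟨x, hx, rfl⟩ hxδ hαx
    exact hin x hx (lift_lt.1 hxδ) (lift_le.1 hαx)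
  · refine ⟨_, lift_lt.2 hα, Or.inr ?_⟩
    rintro _ ⟨x, hx, rfl⟩ hαx
    exact hout x hx (lift_le.1 hαx)

end Lift

theorem Measuring.lift (h : Measuring.{u}) : Measuring.{max u v} := by
  intro Cseq hCseq
  obtain ⟨D, hD, hmeas⟩ := h (fun δ => Ordinal.lift.{v} ⁻¹' Cseq (Ordinal.lift.{v} δ))
    fun δ hδ hlim => (hCseq _ (lift_omega1.{u, v} ▸ lift_lt.2 hδ) (isSuccLimit_lift.2 hlim)).preimage_lift
  refine ⟨Ordinal.lift.{v} '' D, lift_omega1.{u, v} ▸ hD.lift, ?_⟩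
  rintro _ ⟨δ, hδ, rfl⟩ hlim
  exact (hmeas δ hδ (isSuccLimit_lift.1 hlim)).lift

theorem WeakClubGuessing.lift (h : WeakClubGuessing.{u}) : WeakClubGuessing.{max u v} := by
  obtain ⟨L, hL, hguess⟩ := h
  have hinv : LeftInverse (invFun Ordinal.lift.{v}) Ordinal.lift.{v} :=
    leftInverse_invFun fun _ _ => lift_inj.1
  refine ⟨fun δ => Ordinal.lift.{v} '' L (invFun Ordinal.lift.{v} δ), fun δ' hδ' hlim => ?_,
    fun D hD => ?_⟩
  · obtain ⟨δ, hδ, rfl⟩ := Ordinal.lt_lift_iff.1 (lift_omega1.{u, v}.symm ▸ hδ')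
    convert (hL δ hδ (isSuccLimit_lift.1 hlim)).lift using 3
    exact hinv δ
  · obtain ⟨δ, hδ, hlim, hinf⟩ := hguess _ (lift_omega1.{u, v}.symm ▸ hD).preimage_lift
    refine ⟨_, lift_omega1.{u, v} ▸ lift_lt.2 hδ, isSuccLimit_lift.2 hlim,
      (hinf.image fun _ _ _ _ => lift_inj.1).mono ?_⟩
    rintro _ ⟨x, ⟨hxD, hxL⟩, rfl⟩
    exact ⟨hxD, x, (hinv δ).symm ▸ hxL, rfl⟩

/-- Measuring implies the negation of Weak Club Guessing: if every
club-sequence `⟨C_δ : δ ∈ Lim(ω1)⟩` is measured by some club of `ω1`, then there is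
no ladder system `⟨L_δ : δ ∈ Lim(ω1)⟩` such that every club of `ω1` has infinite
intersection with some `L_δ`. -/
theorem measuring_implies_not_wcg
    (hMeasuring : ∀ Cseq : Ordinal → Set Ordinal,
      (∀ δ, δ < omega1 → Order.IsSuccLimit δ → IsClubIn δ (Cseq δ)) →
      ∃ D : Set Ordinal, IsClubIn omega1 D ∧
        ∀ δ ∈ D, Order.IsSuccLimit δ →
          ∃ α < δ, ((∀ x ∈ D, x < δ → α ≤ x → x ∈ Cseq δ) ∨
                    (∀ x ∈ D, α ≤ x → x ∉ Cseq δ))) :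
    ¬ ∃ L : Ordinal → Set Ordinal,
        (∀ δ, δ < omega1 → Order.IsSuccLimit δ → IsLadderOn δ (L δ)) ∧
        (∀ D : Set Ordinal, IsClubIn omega1 D →
          ∃ δ, δ < omega1 ∧ Order.IsSuccLimit δ ∧ (D ∩ L δ).Infinite) := fun hWCG =>
  not_weakClubGuessing_of_measuring (Measuring.lift.{u_1, u_2} hMeasuring)
    (WeakClubGuessing.lift.{u_2, u_1} hWCG)
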